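/- For differentiable u, v : ℝ² × (ℝ \ {0}) → ℝ (coordinates (x,y,t), t ≠ 0), define {u,v} = ((x²+y²)/t)(∂_x u·∂_y v − ∂_y u·∂_x v) + 2x(∂_t u·∂_y v − ∂_y u·∂_t v) − 2y(∂_t u·∂_x v − ∂_x u·∂_t v). Let c(x,y,t) := (x²+y²)/t. Then for every differentiable g : ℝ² × (ℝ \ {0}) → ℝ and every point (x,y,t) with t ≠ 0, {c, g}(x,y,t) = 0. -/
import Mathlib


/-- Partial derivative in the first coordinate of `ℝ³`. -/
noncomputable def pdx (u : ℝ × ℝ × ℝ → ℝ) (P : ℝ × ℝ × ℝ) : ℝ :=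
  deriv (fun s => u (s, P.2.1, P.2.2)) P.1

/-- Partial derivative in the second coordinate of `ℝ³`. -/
noncomputable def pdy (u : ℝ × ℝ × ℝ → ℝ) (P : ℝ × ℝ × ℝ) : ℝ :=
  deriv (fun s => u (P.1, s, P.2.2)) P.2.1

/-- Partial derivative in the third coordinate of `ℝ³`. -/
noncomputable def pdt (u : ℝ × ℝ × ℝ → ℝ) (P : ℝ × ℝ × ℝ) : ℝ :=
  deriv (fun s => u (P.1, P.2.1, s)) P.2.2

/-- The Poissonization of the 2D Jacobi structure
`Λ = (x²+y²) ∂x ∧ ∂y`, `E = 2x ∂y − 2y ∂x` on coordinates `(x,y,t)`, `t ≠ 0`. -/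
noncomputable def br2 (u v : ℝ × ℝ × ℝ → ℝ) (P : ℝ × ℝ × ℝ) : ℝ :=
  ((P.1 ^ 2 + P.2.1 ^ 2) / P.2.2) * (pdx u P * pdy v P - pdy u P * pdx v P)
  + 2 * P.1 * (pdt u P * pdy v P - pdy u P * pdt v P)
  - 2 * P.2.1 * (pdt u P * pdx v P - pdx u P * pdt v P)

/-- The Casimir candidate `c(x,y,t) = (x²+y²)/t`. -/
noncomputable def casimir2D (P : ℝ × ℝ × ℝ) : ℝ := (P.1 ^ 2 + P.2.1 ^ 2) / P.2.2

lemma pdx_cas (x y t : ℝ) : pdx casimir2D (x, y, t) = 2 * x / t := by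
  simp only [pdx, casimir2D]
  rw [deriv_div_const]
  simp [mul_comm]

lemma pdy_cas (x y t : ℝ) : pdy casimir2D (x, y, t) = 2 * y / t := by
  simp only [pdy, casimir2D]
  rw [deriv_div_const]
  simp


lemma pdt_cas (x y t : ℝ) (ht : t ≠ 0) :
    pdt casimir2D (x, y, t) = -(x ^ 2 + y ^ 2) / t ^ 2 := by
  simp only [pdt, casimir2D]
  have : (fun s : ℝ => (x ^ 2 + y ^ 2) / s) = fun s => (x ^ 2 + y ^ 2) * s⁻¹ := by
    funext s; ring
  rw [this, deriv_const_mul _ (differentiableAt_inv ht), deriv_inv]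
  field_simp

theorem stmt_10' (g : ℝ × ℝ × ℝ → ℝ)
    (hg : ∀ P : ℝ × ℝ × ℝ, P.2.2 ≠ 0 → DifferentiableAt ℝ g P) :
    ∀ x y t : ℝ, t ≠ 0 → br2 casimir2D g (x, y, t) = 0 := by
  intro x y t ht
  simp only [br2, pdx_cas, pdy_cas, pdt_cas x y t ht]
  field_simp
  ring

/-- `c = (x²+y²)/t` is a Casimir of the Poissonized 2D Jacobi structure. -/
theorem stmt_10 (g : ℝ × ℝ × ℝ → ℝ)
    (hg : ∀ P : ℝ × ℝ × ℝ, P.2.2 ≠ 0 → DifferentiableAt ℝ g P) :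
    ∀ x y t : ℝ, t ≠ 0 → br2 casimir2D g (x, y, t) = 0 := by
  exact stmt_10' g hg
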